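/- arXiv:2002.05142 — 2 statements merged into one kernel-verified Lean document; each statement's English description precedes it below -/
import Mathlib

section
/- For all natural numbers g, m, N with 1 ≤ m ≤ g−1, the binomial coefficient identity C(g,m)·C(N+g−1, g−1) = C(N+g−m−1, g−m)·C(N+g−1, m−1) + C(N+g−m−1, g−m−1)·C(N+g, m) holds (where C(a,b) denotes the binomial coefficient 'a choose b', equal to 0 when b > a). -/
/-!
Write m = a + 1 and g = a + b + 2. After multiplying by (a + 1)(b + 1), the absorption identity
k·C(n, k) = n·C(n - 1, k - 1) and C(n, k)·C(k, s) = C(n, s)·C(n - s, k - s) turn each of the three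
products of binomial coefficients into a polynomial multiple of C(N + b, b)·C(N + a + b + 1, a),
and the identity reduces to (a + b + 2)(N + b + 1) = N(a + 1) + (b + 1)(N + a + b + 2).
-/

namespace Nat

theorem add_one_mul_add_one_mul_choose_mul_choose (N a b : ℕ) :
    (a + 1) * (b + 1) * (choose (a + b + 2) (a + 1) * choose (N + a + b + 1) (a + b + 1)) =
      (a + b + 2) * (N + b + 1) * (choose (N + b) b * choose (N + a + b + 1) a) := by
  have hmul : choose (N + a + b + 1) (a + b + 1) * choose (a + b + 1) a =
      choose (N + a + b + 1) a * choose (N + b + 1) (b + 1) := by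
    rw [choose_mul (by omega), show N + a + b + 1 - a = N + b + 1 by omega,
      show a + b + 1 - a = b + 1 by omega]
  have ha : (a + 1) * choose (a + b + 2) (a + 1) = (a + b + 2) * choose (a + b + 1) a := by
    rw [mul_comm, ← add_one_mul_choose_eq]
  have hb : (b + 1) * choose (N + b + 1) (b + 1) = (N + b + 1) * choose (N + b) b := by
    rw [mul_comm, ← add_one_mul_choose_eq]
  calc (a + 1) * (b + 1) * (choose (a + b + 2) (a + 1) * choose (N + a + b + 1) (a + b + 1))
      = (a + b + 2) * (b + 1) * (choose (N + a + b + 1) (a + b + 1) * choose (a + b + 1) a) := by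
        rw [← mul_assoc, mul_right_comm _ (b + 1), ha]; ring
    _ = (a + b + 2) * ((b + 1) * choose (N + b + 1) (b + 1)) * choose (N + a + b + 1) a := by
        rw [hmul]; ring
    _ = _ := by rw [hb]; ring

theorem choose_mul_choose_eq_add (N a b : ℕ) :
    choose (a + b + 2) (a + 1) * choose (N + a + b + 1) (a + b + 1) =
      choose (N + b) (b + 1) * choose (N + a + b + 1) a +
        choose (N + b) b * choose (N + a + b + 2) (a + 1) := by
  have hb : choose (N + b) (b + 1) * (b + 1) = N * choose (N + b) b := by
    rw [choose_succ_right_eq, Nat.add_sub_cancel, mul_comm]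
  have ha : (a + 1) * choose (N + a + b + 2) (a + 1) =
      (N + a + b + 2) * choose (N + a + b + 1) a := by
    rw [mul_comm, ← add_one_mul_choose_eq]
  apply Nat.eq_of_mul_eq_mul_left (show 0 < (a + 1) * (b + 1) by positivity)
  rw [add_one_mul_add_one_mul_choose_mul_choose]
  calc (a + b + 2) * (N + b + 1) * (choose (N + b) b * choose (N + a + b + 1) a)
      = (N * (a + 1) + (b + 1) * (N + a + b + 2)) *
          (choose (N + b) b * choose (N + a + b + 1) a) := by
        ring
    _ = (a + 1) * (choose (N + b) (b + 1) * (b + 1)) * choose (N + a + b + 1) a +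
          (b + 1) * choose (N + b) b * ((a + 1) * choose (N + a + b + 2) (a + 1)) := by
        rw [hb, ha]; ring
    _ = _ := by ring

end Nat

theorem binomial_recursion_step (g m N : ℕ) (h1 : 1 ≤ m) (h2 : m ≤ g - 1) :
    Nat.choose g m * Nat.choose (N + g - 1) (g - 1) =
      Nat.choose (N + g - m - 1) (g - m) * Nat.choose (N + g - 1) (m - 1) +
        Nat.choose (N + g - m - 1) (g - m - 1) * Nat.choose (N + g) m := by
  obtain ⟨a, rfl⟩ : ∃ a, m = a + 1 := ⟨m - 1, by omega⟩
  obtain ⟨b, rfl⟩ : ∃ b, g = a + b + 2 := ⟨g - (a + 2), by omega⟩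
  rw [show N + (a + b + 2) - 1 = N + a + b + 1 by omega, show a + b + 2 - 1 = a + b + 1 by omega,
    show N + (a + b + 2) - (a + 1) - 1 = N + b by omega, show a + b + 2 - (a + 1) = b + 1 by omega,
    show b + 1 - 1 = b by omega, Nat.add_sub_cancel,
    show N + (a + b + 2) = N + a + b + 2 by omega]
  exact Nat.choose_mul_choose_eq_add N a b
end

section
/- Let A be a (not necessarily commutative) ring, g ≥ 1 a natural number, D : A → A an additive map, and ξ, ξ', α : Fin g → A families of elements. For each μ write P_μ := ξ_1 · ⋯ · ξ_{μ−1} · ξ'_{μ+1} · ⋯ · ξ'_g (the product of ξ_ν for ν < μ followed by ξ'_ν for ν > μ, in increasing order of indices). Assume: (i) D(α_μ · P_μ) = D(α_μ) · P_μ + α_μ · D(P_μ) for every μ; (ii) D(P_μ) = 0 for every μ; (iii) D(α_μ) = ξ'_μ − ξ_μ for every μ; (iv) for all indices i ≠ j, the elements anticommute pairwise: ξ_i ξ_j = −ξ_j ξ_i, ξ'_i ξ'_j = −ξ'_j ξ'_i, and ξ_i ξ'_j = −ξ'_j ξ_i. Then D( ∑_{μ=1}^g (−1)^{μ−1} α_μ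 · P_μ ) = ξ'_1 · ⋯ · ξ'_g − ξ_1 · ⋯ · ξ_g. -/
/-!
With `0`-based indices put `F k := ξ_0 ⋯ ξ_{k-1} · ξ'_k ⋯ ξ'_{g-1}`, so that `F 0` is the product
of the `ξ'` and `F g` the product of the `ξ`. By the Leibniz rule and closedness of `P_μ`, `D` maps
the `μ`-th summand to `(-1)^μ (ξ'_μ - ξ_μ) P_μ`. Moving `ξ'_μ - ξ_μ` past the `μ` leading factors
`ξ_ν`, `ν < μ`, of `P_μ` costs exactly the sign `(-1)^μ` and lands it in the slot between the `ξ`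
and the `ξ'`, so the summand becomes `F μ - F (μ + 1)` and the sum telescopes to `F 0 - F g`.
-/

theorem AddMonoidHom.map_neg_one_pow_mul {A B : Type*} [Ring A] [Ring B] (f : A →+ B) (n : ℕ)
    (x : A) : f ((-1) ^ n * x) = (-1) ^ n * f x := by
  rcases n.even_or_odd with h | h <;> simp [h.neg_one_pow]

theorem mul_list_prod_of_anticommute {A : Type*} [Ring A] {x : A} {l : List A}
    (h : ∀ a ∈ l, x * a = -(a * x)) : x * l.prod = (-1) ^ l.length * (l.prod * x) := by
  induction l with
  | nil => simp
  | cons a l ih =>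
    simp only [List.forall_mem_cons] at h
    rw [List.prod_cons, ← mul_assoc, h.1, neg_mul, mul_assoc, ih h.2, List.length_cons, pow_succ,
      ← ((Commute.neg_one_left a).pow_left l.length).left_comm]
    simp [mul_assoc]

namespace List

variable {ι : Type*} [Preorder ι] [DecidableLT ι] {l : List ι} {k : ℕ}

theorem Pairwise.filter_lt_getElem (hl : l.Pairwise (· < ·)) (hk : k < l.length) :
    l.filter (· < l[k]) = l.take k := by
  have hsplit : l.take k ++ l[k] :: l.drop (k + 1) = l := by simp
  rw [← hsplit, pairwise_append, pairwise_cons] at hl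
  obtain ⟨-, ⟨hafter, -⟩, hbefore⟩ := hl
  conv_lhs => arg 2; rw [← hsplit]
  rw [filter_append, filter_cons_of_neg (by simp),
    filter_eq_self.2 fun a ha => by simpa using hbefore a ha _ mem_cons_self,
    filter_eq_nil_iff.2 fun b hb => by simpa using (hafter b hb).not_gt, append_nil]

theorem Pairwise.filter_getElem_lt (hl : l.Pairwise (· < ·)) (hk : k < l.length) :
    l.filter (l[k] < ·) = l.drop (k + 1) := by
  have hsplit : l.take k ++ l[k] :: l.drop (k + 1) = l := by simp
  rw [← hsplit, pairwise_append, pairwise_cons] at hl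
  obtain ⟨-, ⟨hafter, -⟩, hbefore⟩ := hl
  conv_lhs => arg 2; rw [← hsplit]
  rw [filter_append, filter_cons_of_neg (by simp),
    filter_eq_nil_iff.2 fun a ha => by simpa using (hbefore a ha _ mem_cons_self).not_gt,
    filter_eq_self.2 fun b hb => by simpa using hafter b hb, nil_append]

end List

section MixedProd

variable {ι A : Type*} [Ring A] (l : List ι) (ξ ξ' : ι → A)

def mixedProd (k : ℕ) : A := ((l.take k).map ξ).prod * ((l.drop k).map ξ').prod

@[simp]
theorem mixedProd_zero : mixedProd l ξ ξ' 0 = (l.map ξ').prod := by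
  simp [mixedProd]

@[simp]
theorem mixedProd_length : mixedProd l ξ ξ' l.length = (l.map ξ).prod := by
  simp [mixedProd]

variable {l ξ ξ'}

theorem neg_one_pow_mul_sub_mul_eq_mixedProd_sub {k : ℕ} {a : ι} (hk : k < l.length)
    (ha : l[k] = a) (h : ∀ i ∈ l.take k, (ξ' a - ξ a) * ξ i = -(ξ i * (ξ' a - ξ a))) :
    (-1) ^ k * ((ξ' a - ξ a) * (((l.take k).map ξ).prod * ((l.drop (k + 1)).map ξ').prod)) =
      mixedProd l ξ ξ' k - mixedProd l ξ ξ' (k + 1) := by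
  subst ha
  set x := ξ' l[k] - ξ l[k]
  set T := ((l.take k).map ξ).prod
  set V := ((l.drop (k + 1)).map ξ').prod
  have hswap : x * T = (-1) ^ k * (T * x) := by
    have := mul_list_prod_of_anticommute (l := (l.take k).map ξ) (List.forall_mem_map.2 h)
    rwa [List.length_map, List.length_take, min_eq_left hk.le] at this
  calc (-1) ^ k * (x * (T * V)) = (-1) ^ (k + k) * (T * x * V) := by
        rw [← mul_assoc x, hswap, pow_add]; simp only [mul_assoc]
    _ = T * (ξ' l[k] * V) - T * ξ l[k] * V := by
        rw [Even.neg_one_pow ⟨k, rfl⟩, one_mul, mul_sub, sub_mul, mul_assoc]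
    _ = mixedProd l ξ ξ' k - mixedProd l ξ ξ' (k + 1) := by
        rw [mixedProd, mixedProd, ← List.getElem_cons_drop hk, List.take_succ_eq_append_getElem hk]
        simp only [List.map_cons, List.prod_cons, List.map_append, List.prod_append,
          List.map_nil, List.prod_nil, mul_one, T, V]

end MixedProd

open List in
theorem telescoping_wedge_identity_general {A : Type*} [Ring A] (g : ℕ)
    (D : A →+ A) (ξ ξ' α : Fin g → A)
    (P : Fin g → A)
    (hP : ∀ μ : Fin g,
      P μ = (((List.finRange g).filter (fun ν => ν < μ)).map ξ).prod *
            (((List.finRange g).filter (fun ν => μ < ν)).map ξ').prod)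
    (hLeibniz : ∀ μ : Fin g, D (α μ * P μ) = D (α μ) * P μ + α μ * D (P μ))
    (hPclosed : ∀ μ : Fin g, D (P μ) = 0)
    (hα : ∀ μ : Fin g, D (α μ) = ξ' μ - ξ μ)
    (hanti : ∀ i j : Fin g, i ≠ j →
      ξ i * ξ j = -(ξ j * ξ i) ∧ ξ' i * ξ' j = -(ξ' j * ξ' i) ∧
        ξ i * ξ' j = -(ξ' j * ξ i)) :
    D (∑ μ : Fin g, (-1 : A) ^ (μ : ℕ) * (α μ * P μ)) =
      ((List.finRange g).map ξ').prod - ((List.finRange g).map ξ).prod := by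
  set F := mixedProd (finRange g) ξ ξ'
  have hterm (μ : Fin g) : D ((-1) ^ (μ : ℕ) * (α μ * P μ)) = F μ - F (μ + 1) := by
    have hk : (μ : ℕ) < (finRange g).length := by simp
    have hbefore : (finRange g).filter (· < μ) = (finRange g).take μ := by
      simpa using (pairwise_lt_finRange g).filter_lt_getElem hk
    have hafter : (finRange g).filter (μ < ·) = (finRange g).drop (μ + 1) := by
      simpa using (pairwise_lt_finRange g).filter_getElem_lt hk
    rw [D.map_neg_one_pow_mul, hLeibniz, hPclosed, mul_zero, add_zero, hα, hP, hbefore, hafter]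
    refine neg_one_pow_mul_sub_mul_eq_mixedProd_sub hk (by simp) fun i hi => ?_
    have hne : i ≠ μ := by
      rw [← hbefore, mem_filter, decide_eq_true_iff] at hi
      exact hi.2.ne
    have hξ := (hanti μ i hne.symm).1
    have hξ' := neg_eq_iff_eq_neg.1 (hanti i μ hne).2.2.symm
    rw [sub_mul, mul_sub, hξ, hξ']
    abel
  rw [map_sum, Finset.sum_congr rfl fun μ _ => hterm μ,
    Fin.sum_univ_eq_sum_range (fun k => F k - F (k + 1)), Finset.sum_range_sub']
  simp only [F, mixedProd_zero]
  rw [← mixedProd_length (finRange g) ξ ξ', length_finRange]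

open List in
theorem telescoping_wedge_identity {A : Type*} [Ring A] (g : ℕ) (hg : 1 ≤ g)
    (D : A →+ A) (ξ ξ' α : Fin g → A)
    (P : Fin g → A)
    (hP : ∀ μ : Fin g,
      P μ = (((List.finRange g).filter (fun ν => ν < μ)).map ξ).prod *
            (((List.finRange g).filter (fun ν => μ < ν)).map ξ').prod)
    (hLeibniz : ∀ μ : Fin g, D (α μ * P μ) = D (α μ) * P μ + α μ * D (P μ))
    (hPclosed : ∀ μ : Fin g, D (P μ) = 0)
    (hα : ∀ μ : Fin g, D (α μ) = ξ' μ - ξ μ)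
    (hanti : ∀ i j : Fin g, i ≠ j →
      ξ i * ξ j = -(ξ j * ξ i) ∧ ξ' i * ξ' j = -(ξ' j * ξ' i) ∧
        ξ i * ξ' j = -(ξ' j * ξ i)) :
    D (∑ μ : Fin g, (-1 : A) ^ (μ : ℕ) * (α μ * P μ)) =
      ((List.finRange g).map ξ').prod - ((List.finRange g).map ξ).prod :=
  telescoping_wedge_identity_general g D ξ ξ' α P hP hLeibniz hPclosed hα hanti
end
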